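/- arXiv:0901.4036 — 2 statements merged into one kernel-verified Lean document; each statement's English description precedes it below -/
import Mathlib

section
/- Solution variety: let b ∈ ℝ^m, assume a₁, …, a_i are linearly independent, and suppose x_{i+1} ∈ ℝⁿ satisfies a_jᵀ x_{i+1} = b_j for j = 1, …, i. Then the set of all solutions of the first i equations, {x ∈ ℝⁿ : a_jᵀ x = b_j for j = 1, …, i}, equals the affine variety {x_{i+1} + H_{i+1}ᵀ q : q ∈ ℝⁿ}. -/
open Matrix

/-! The Abaffian `H (i + 1)` annihilates `a 1, …, a i`, since each update kills the current `a i`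
and preserves the kernel of the previous matrix. Conversely, every vector orthogonal to
`a 1, …, a i` stays in the range of `H (i + 1)ᵀ`: on such vectors the transposed update differs
from `H iᵀ` only by a multiple of `a i ⬝ᵥ H iᵀ u = 0`, and `H 1ᵀ` is onto. So
`range (H (i + 1)ᵀ)` is exactly the orthogonal complement of `a 1, …, a i`, i.e. the solution
set of the first `i` equations shifted by `-x₁`. -/

section AbaffianUpdate

variable {K ι : Type*} [Field K] [Fintype ι]

def abaffianUpdate (H : Matrix ι ι K) (a w : ι → K) : Matrix ι ι K :=
  H - (w ⬝ᵥ H *ᵥ a)⁻¹ • vecMulVec (H *ᵥ a) (w ᵥ* H)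

theorem abaffianUpdate_mulVec (H : Matrix ι ι K) (a w c : ι → K) :
    abaffianUpdate H a w *ᵥ c = H *ᵥ c - ((w ⬝ᵥ H *ᵥ a)⁻¹ * (w ⬝ᵥ H *ᵥ c)) • (H *ᵥ a) := by
  rw [abaffianUpdate, sub_mulVec, smul_mulVec, vecMulVec_mulVec, op_smul_eq_smul, smul_smul,
    ← dotProduct_mulVec]

theorem abaffianUpdate_mulVec_self {H : Matrix ι ι K} {a w : ι → K} (h : w ⬝ᵥ H *ᵥ a ≠ 0) :
    abaffianUpdate H a w *ᵥ a = 0 := by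
  rw [abaffianUpdate_mulVec, inv_mul_cancel₀ h, one_smul, sub_self]

theorem abaffianUpdate_mulVec_eq_zero {H : Matrix ι ι K} {c : ι → K} (a w : ι → K)
    (hc : H *ᵥ c = 0) : abaffianUpdate H a w *ᵥ c = 0 := by
  rw [abaffianUpdate_mulVec, hc, dotProduct_zero, mul_zero, zero_smul, sub_zero]

theorem transpose_abaffianUpdate_mulVec {H : Matrix ι ι K} {a u : ι → K} (w : ι → K)
    (hu : a ⬝ᵥ Hᵀ *ᵥ u = 0) : (abaffianUpdate H a w)ᵀ *ᵥ u = Hᵀ *ᵥ u := by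
  have hHa : H *ᵥ a ⬝ᵥ u = 0 := by
    rwa [dotProduct_comm, dotProduct_mulVec, ← mulVec_transpose, dotProduct_comm]
  rw [abaffianUpdate, transpose_sub, transpose_smul, transpose_vecMulVec, sub_mulVec, smul_mulVec,
    vecMulVec_mulVec, hHa, MulOpposite.op_zero, zero_smul, smul_zero, sub_zero]

end AbaffianUpdate

section AbaffianSequence

variable {K ι : Type*} [Field K] [Fintype ι] {m : ℕ} {a w : ℕ → ι → K}
  {H : ℕ → Matrix ι ι K}

theorem abaffian_mulVec_eq_zero (hw : ∀ i, 1 ≤ i → i ≤ m → w i ⬝ᵥ H i *ᵥ a i ≠ 0)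
    (hrec : ∀ i, 1 ≤ i → i ≤ m → H (i + 1) = abaffianUpdate (H i) (a i) (w i)) :
    ∀ i ≤ m, ∀ j, 1 ≤ j → j ≤ i → H (i + 1) *ᵥ a j = 0 := by
  intro i
  induction i with
  | zero => omega
  | succ i ih =>
    intro hi j hj hji
    rw [hrec (i + 1) (by omega) hi]
    obtain rfl | hji := eq_or_lt_of_le hji
    · exact abaffianUpdate_mulVec_self (hw _ hj hi)
    · exact abaffianUpdate_mulVec_eq_zero _ _ (ih (by omega) j hj (by omega))

theorem exists_abaffian_transpose_mulVec_eq [DecidableEq ι] (hH1 : IsUnit (H 1))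
    (hrec : ∀ i, 1 ≤ i → i ≤ m → H (i + 1) = abaffianUpdate (H i) (a i) (w i)) :
    ∀ i ≤ m, ∀ v : ι → K, (∀ j, 1 ≤ j → j ≤ i → a j ⬝ᵥ v = 0) →
      ∃ q, (H (i + 1))ᵀ *ᵥ q = v := by
  intro i
  induction i with
  | zero =>
    intro _ v _
    obtain ⟨q, hq⟩ := vecMul_surjective_iff_isUnit.mpr hH1 v
    exact ⟨q, by rwa [mulVec_transpose]⟩
  | succ i ih =>
    intro hi v hv
    obtain ⟨q, hq⟩ := ih (by omega) v fun j hj hji => hv j hj (by omega)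
    refine ⟨q, ?_⟩
    rw [hrec (i + 1) (by omega) hi, transpose_abaffianUpdate_mulVec _ (hq ▸ hv _ le_add_self le_rfl),
      hq]

end AbaffianSequence

theorem abs_solution_variety_general
    (m n : ℕ)
    (a w : ℕ → (Fin n → ℝ))
    (H : ℕ → Matrix (Fin n) (Fin n) ℝ)
    (hH1 : IsUnit (H 1))
    (hw : ∀ i, 1 ≤ i → i ≤ m → w i ⬝ᵥ (H i).mulVec (a i) ≠ 0)
    (hrec : ∀ i, 1 ≤ i → i ≤ m →
      H (i + 1) = H i - (w i ⬝ᵥ (H i).mulVec (a i))⁻¹ •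
        Matrix.vecMulVec ((H i).mulVec (a i)) (Matrix.vecMul (w i) (H i))) :
    ∀ i, 1 ≤ i → i ≤ m →
      LinearIndependent ℝ (fun j : Fin i => a (j.1 + 1)) →
      ∀ (b : ℕ → ℝ) (x₁ : Fin n → ℝ),
        (∀ j, 1 ≤ j → j ≤ i → a j ⬝ᵥ x₁ = b j) →
        {x : Fin n → ℝ | ∀ j, 1 ≤ j → j ≤ i → a j ⬝ᵥ x = b j} =
          {x : Fin n → ℝ | ∃ q : Fin n → ℝ, x = x₁ + Matrix.mulVec (H (i + 1))ᵀ q} := by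
  intro i _ him _ b x₁ hx₁
  ext x
  constructor
  · intro hx
    obtain ⟨q, hq⟩ := exists_abaffian_transpose_mulVec_eq hH1 hrec i him (x - x₁)
      fun j hj hji => by rw [dotProduct_sub, hx j hj hji, hx₁ j hj hji, sub_self]
    exact ⟨q, by rw [hq, add_sub_cancel]⟩
  · rintro ⟨q, rfl⟩ j hj hji
    rw [dotProduct_add, hx₁ j hj hji, dotProduct_mulVec, vecMul_transpose,
      abaffian_mulVec_eq_zero hw hrec i him j hj hji, zero_dotProduct, add_zero]

theorem abs_solution_variety
    (m n : ℕ) (hm : 0 < m) (hmn : m ≤ n)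
    (a z w p : ℕ → (Fin n → ℝ))
    (H : ℕ → Matrix (Fin n) (Fin n) ℝ)
    (hH1 : IsUnit (H 1))
    (hz : ∀ i, 1 ≤ i → i ≤ m → z i ⬝ᵥ (H i).mulVec (a i) ≠ 0)
    (hw : ∀ i, 1 ≤ i → i ≤ m → w i ⬝ᵥ (H i).mulVec (a i) ≠ 0)
    (hrec : ∀ i, 1 ≤ i → i ≤ m →
      H (i + 1) = H i - (w i ⬝ᵥ (H i).mulVec (a i))⁻¹ •
        Matrix.vecMulVec ((H i).mulVec (a i)) (Matrix.vecMul (w i) (H i)))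
    (hp : ∀ i, 1 ≤ i → i ≤ m → p i = Matrix.mulVec (H i)ᵀ (z i)) :
    ∀ i, 1 ≤ i → i ≤ m →
      LinearIndependent ℝ (fun j : Fin i => a (j.1 + 1)) →
      ∀ (b : ℕ → ℝ) (x₁ : Fin n → ℝ),
        (∀ j, 1 ≤ j → j ≤ i → a j ⬝ᵥ x₁ = b j) →
        {x : Fin n → ℝ | ∀ j, 1 ≤ j → j ≤ i → a j ⬝ᵥ x = b j} =
          {x : Fin n → ℝ | ∃ q : Fin n → ℝ, x = x₁ + Matrix.mulVec (H (i + 1))ᵀ q} :=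
  abs_solution_variety_general m n a w H hH1 hw hrec
end

section
/- Proposition 4.6 (finite termination of ABS-S): the ABS-S algorithm terminates after m steps with a solution of the full stochastic system, i.e. the final iterate ξ_{m+1} satisfies A ξ_{m+1}(ω) = η(ω) for every ω ∈ Ω. -/
/-!
Each Abaffian update annihilates the current row, `H (i+1) *ᵥ a i = 0`, and preserves every
earlier annihilation, so `H j *ᵥ a i = 0` for all `j > i`. Hence a later search vector
`p j = (H j)ᵀ z j` is orthogonal to `a i`, and the step along `p j` leaves `a i ⬝ᵥ ξ` unchanged.
Since step `i` itself places the iterate on the hyperplane `a i ⬝ᵥ ξ = η i` (for every `ω`),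
the final iterate lies on all `m` hyperplanes.
-/

open Matrix MeasureTheory ProbabilityTheory

namespace Matrix

variable {K ι : Type*} [Field K] [Fintype ι]

def abaffianUpdate (H : Matrix ι ι K) (a w : ι → K) : Matrix ι ι K :=
  H - (w ⬝ᵥ H *ᵥ a)⁻¹ • vecMulVec (H *ᵥ a) (w ᵥ* H)

theorem abaffianUpdate_mulVec (H : Matrix ι ι K) (a w b : ι → K) :
    abaffianUpdate H a w *ᵥ b = H *ᵥ b - ((w ⬝ᵥ H *ᵥ b) / (w ⬝ᵥ H *ᵥ a)) • H *ᵥ a := by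
  rw [abaffianUpdate, sub_mulVec, smul_mulVec, vecMulVec_mulVec, op_smul_eq_smul, smul_smul,
    ← dotProduct_mulVec, inv_mul_eq_div]

theorem abaffianUpdate_mulVec_self {H : Matrix ι ι K} {a w : ι → K} (h : w ⬝ᵥ H *ᵥ a ≠ 0) :
    abaffianUpdate H a w *ᵥ a = 0 := by
  rw [abaffianUpdate_mulVec, div_self h, one_smul, sub_self]

theorem abaffianUpdate_mulVec_of_mulVec_eq_zero {H : Matrix ι ι K} {b : ι → K}
    (a w : ι → K) (hb : H *ᵥ b = 0) : abaffianUpdate H a w *ᵥ b = 0 := by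
  rw [abaffianUpdate_mulVec, hb, dotProduct_zero, zero_div, zero_smul, sub_zero]

theorem abaffian_mulVec_eq_zero {H : ℕ → Matrix ι ι K} {a w : ℕ → ι → K} {i m : ℕ}
    (hw : w i ⬝ᵥ H i *ᵥ a i ≠ 0)
    (hrec : ∀ j, i ≤ j → j ≤ m → H (j + 1) = abaffianUpdate (H j) (a j) (w j)) :
    ∀ j, i < j → j ≤ m + 1 → H j *ᵥ a i = 0 := by
  intro j hij
  induction j, hij using Nat.le_induction with
  | base => intro him; rw [hrec i le_rfl (by omega), abaffianUpdate_mulVec_self hw]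
  | succ j hij ih =>
    intro hjm
    rw [hrec j (by omega) (by omega),
      abaffianUpdate_mulVec_of_mulVec_eq_zero _ _ (ih (by omega))]

theorem dotProduct_sub_div_smul {a x p : ι → K} (t : K) (hap : a ⬝ᵥ p ≠ 0) :
    a ⬝ᵥ (x - ((a ⬝ᵥ x - t) / (a ⬝ᵥ p)) • p) = t := by
  rw [dotProduct_sub, dotProduct_smul, smul_eq_mul, div_mul_cancel₀ _ hap, sub_sub_cancel]

theorem dotProduct_sub_smul_of_dotProduct_eq_zero {a x p : ι → K} (c : K) (hap : a ⬝ᵥ p = 0) :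
    a ⬝ᵥ (x - c • p) = a ⬝ᵥ x := by
  rw [dotProduct_sub, dotProduct_smul, hap, smul_zero, sub_zero]

theorem projection_iterate_dotProduct {ξ a p : ℕ → ι → K} {t : ℕ → K} {i m : ℕ}
    (hap : a i ⬝ᵥ p i ≠ 0) (horth : ∀ j, i < j → j ≤ m → a i ⬝ᵥ p j = 0)
    (hξ : ∀ j, i ≤ j → j ≤ m →
      ξ (j + 1) = ξ j - ((a j ⬝ᵥ ξ j - t j) / (a j ⬝ᵥ p j)) • p j) :
    ∀ j, i < j → j ≤ m + 1 → a i ⬝ᵥ ξ j = t i := by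
  intro j hij
  induction j, hij using Nat.le_induction with
  | base => intro him; rw [hξ i le_rfl (by omega), dotProduct_sub_div_smul _ hap]
  | succ j hij ih =>
    intro hjm
    rw [hξ j (by omega) (by omega),
      dotProduct_sub_smul_of_dotProduct_eq_zero _ (horth j hij (by omega)), ih (by omega)]

end Matrix

theorem absS_finite_termination_general
    (m n : ℕ)
    (a z w p : ℕ → (Fin n → ℝ))
    (H : ℕ → Matrix (Fin n) (Fin n) ℝ)
    (hz : ∀ i, 1 ≤ i → i ≤ m → z i ⬝ᵥ (H i).mulVec (a i) ≠ 0)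
    (hw : ∀ i, 1 ≤ i → i ≤ m → w i ⬝ᵥ (H i).mulVec (a i) ≠ 0)
    (hrec : ∀ i, 1 ≤ i → i ≤ m →
      H (i + 1) = H i - (w i ⬝ᵥ (H i).mulVec (a i))⁻¹ •
        Matrix.vecMulVec ((H i).mulVec (a i)) (Matrix.vecMul (w i) (H i)))
    (hp : ∀ i, 1 ≤ i → i ≤ m → p i = Matrix.mulVec (H i)ᵀ (z i))
    {Ω : Type*}
    (η : ℕ → Ω → ℝ)
    (ξ : ℕ → Ω → (Fin n → ℝ)) (τ α : ℕ → Ω → ℝ)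
    (hτ : ∀ i, 1 ≤ i → i ≤ m → ∀ ω, τ i ω = a i ⬝ᵥ ξ i ω - η i ω)
    (hα : ∀ i, 1 ≤ i → i ≤ m → ∀ ω, α i ω = τ i ω / (a i ⬝ᵥ p i))
    (hξ : ∀ i, 1 ≤ i → i ≤ m → ∀ ω, ξ (i + 1) ω = ξ i ω - α i ω • p i)
    (A : Matrix (Fin m) (Fin n) ℝ) (hA : ∀ k : Fin m, A k = a (k.1 + 1)) :
    ∀ ω, A.mulVec (ξ (m + 1) ω) = fun k : Fin m => η (k.1 + 1) ω := by
  have hap : ∀ i j, 1 ≤ j → j ≤ m → a i ⬝ᵥ p j = z j ⬝ᵥ H j *ᵥ a i := fun i j hj hjm => by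
    rw [hp j hj hjm, dotProduct_transpose_mulVec]
  have hkill : ∀ i, 1 ≤ i → i ≤ m → ∀ j, i < j → j ≤ m + 1 → H j *ᵥ a i = 0 :=
    fun i hi him => abaffian_mulVec_eq_zero (hw i hi him) fun j hij hjm => hrec j (by omega) hjm
  intro ω
  ext k
  have hk : 1 ≤ k.1 + 1 ∧ k.1 + 1 ≤ m := ⟨by omega, k.2⟩
  show A k ⬝ᵥ ξ (m + 1) ω = η (k.1 + 1) ω
  rw [hA k]
  refine projection_iterate_dotProduct (ξ := fun j => ξ j ω) (t := fun j => η j ω)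
    (by rw [hap _ _ hk.1 hk.2]; exact hz _ hk.1 hk.2) (fun j hij hjm => ?_)
    (fun j hij hjm => ?_) (m + 1) (by omega) le_rfl
  · rw [hap _ _ (by omega) hjm, hkill _ hk.1 hk.2 j hij (by omega), dotProduct_zero]
  · rw [hξ j (by omega) hjm, hα j (by omega) hjm, hτ j (by omega) hjm]

theorem absS_finite_termination
    (m n : ℕ) (hm : 0 < m) (hmn : m ≤ n)
    (a z w p : ℕ → (Fin n → ℝ))
    (H : ℕ → Matrix (Fin n) (Fin n) ℝ)
    (hH1 : IsUnit (H 1))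
    (hz : ∀ i, 1 ≤ i → i ≤ m → z i ⬝ᵥ (H i).mulVec (a i) ≠ 0)
    (hw : ∀ i, 1 ≤ i → i ≤ m → w i ⬝ᵥ (H i).mulVec (a i) ≠ 0)
    (hrec : ∀ i, 1 ≤ i → i ≤ m →
      H (i + 1) = H i - (w i ⬝ᵥ (H i).mulVec (a i))⁻¹ •
        Matrix.vecMulVec ((H i).mulVec (a i)) (Matrix.vecMul (w i) (H i)))
    (hp : ∀ i, 1 ≤ i → i ≤ m → p i = Matrix.mulVec (H i)ᵀ (z i))
    {Ω : Type*} [MeasurableSpace Ω] (P : Measure Ω) [IsProbabilityMeasure P]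
    (η : ℕ → Ω → ℝ) (v : ℕ → ℝ)
    (hηmeas : ∀ i, Measurable (η i))
    (hηindep : iIndepFun η P)
    (hηlaw : ∀ i, 1 ≤ i → i ≤ m → Measure.map (η i) P = gaussianReal (v i) 1)
    (ξ₁ : Fin n → ℝ)
    (ξ : ℕ → Ω → (Fin n → ℝ)) (τ α : ℕ → Ω → ℝ)
    (hξ1 : ξ 1 = fun _ => ξ₁)
    (hτ : ∀ i, 1 ≤ i → i ≤ m → ∀ ω, τ i ω = a i ⬝ᵥ ξ i ω - η i ω)
    (hα : ∀ i, 1 ≤ i → i ≤ m → ∀ ω, α i ω = τ i ω / (a i ⬝ᵥ p i))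
    (hξ : ∀ i, 1 ≤ i → i ≤ m → ∀ ω, ξ (i + 1) ω = ξ i ω - α i ω • p i)
    (A : Matrix (Fin m) (Fin n) ℝ) (hA : ∀ k : Fin m, A k = a (k.1 + 1)) :
    ∀ ω, A.mulVec (ξ (m + 1) ω) = fun k : Fin m => η (k.1 + 1) ω :=
  absS_finite_termination_general m n a z w p H hz hw hrec hp η ξ τ α hτ hα hξ A hA
end
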